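/- For every λ∈𝒥∖({0}∪Σ4∪Σ5) there are infinitely many n∈ℕ with R^{∘n}(λ)∈φ₋(𝒥), where φ₋(x)=(5−√(25−4x))/2; equivalently, there are infinitely many n with R^{∘n}(λ)∈𝒥 and R^{∘n}(λ)≤(5−√5)/2. -/
import Mathlib


noncomputable section

namespace SGpaper

/-- The polynomial `R(λ) = λ(5-λ)` of spectral decimation. -/
def R : ℂ → ℂ := fun z => z * (5 - z)

/-- The Julia set of `R`: points with bounded forward orbit. -/
def Julia : Set ℂ := {z | Bornology.IsBounded (Set.range fun n => R^[n] z)}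

/-- `Σ₅ = ⋃_m R^{-m}{5}`. -/
def Sigma5 : Set ℂ := ⋃ m : ℕ, R^[m] ⁻¹' {5}

/-- `Σ₄ = ⋃_m R^{-m}{4}`. -/
def Sigma4 : Set ℂ := ⋃ m : ℕ, R^[m] ⁻¹' {4}

/- ### Auxiliary lemmas -/

lemma key0 {b t C : ℝ} (hb : 1 < b) (ht : 0 ≤ t) (h : ∀ k : ℕ, b ^ k * t ≤ C) : t = 0 := by
  by_contra h0
  have ht' : 0 < t := lt_of_le_of_ne ht (Ne.symm h0)
  obtain ⟨k, hk⟩ := pow_unbounded_of_one_lt (C / t) hb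
  have h2 : C < b ^ k * t := (div_lt_iff₀ ht').mp hk
  linarith [h k]

lemma julia_def {z : ℂ} (hz : z ∈ Julia) :
    Bornology.IsBounded (Set.range fun n => R^[n] z) := hz

lemma julia_iter {z : ℂ} (hz : z ∈ Julia) (n : ℕ) : R^[n] z ∈ Julia := by
  refine Bornology.IsBounded.subset (julia_def hz) ?_
  rintro _ ⟨k, rfl⟩
  exact ⟨k + n, Function.iterate_add_apply R k n z⟩

lemma norm_5half : ‖(5/2 : ℂ)‖ = 5/2 := by
  rw [show ((5/2:ℂ)) = ((5/2:ℝ):ℂ) by norm_num, Complex.norm_real]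
  norm_num

lemma norm_R_sub (w : ℂ) : ‖w - 5/2‖^2 - 15/4 ≤ ‖R w - 5/2‖ := by
  have h : R w - 5/2 = -((w - 5/2)^2 - 15/4) := by unfold R; ring
  have h154 : ‖(15/4 : ℂ)‖ = 15/4 := by
    rw [show ((15/4:ℂ)) = ((15/4:ℝ):ℂ) by norm_num, Complex.norm_real]; norm_num
  calc ‖w - 5/2‖^2 - 15/4 = ‖(w - 5/2)^2‖ - ‖(15/4 : ℂ)‖ := by rw [norm_pow, h154]
    _ ≤ ‖(w - 5/2)^2 - 15/4‖ := norm_sub_norm_le _ _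
    _ = ‖R w - 5/2‖ := by rw [h, norm_neg]

lemma escape {t : ℝ} (ht : 0 ≤ t) (z : ℂ) (hz : 5/2 + t ≤ ‖z - 5/2‖) :
    ∀ k : ℕ, 5/2 + 5^k * t ≤ ‖R^[k] z - 5/2‖ := by
  intro k
  induction k with
  | zero => simpa using hz
  | succ k ih =>
    rw [Function.iterate_succ_apply']
    have h1 := norm_R_sub (R^[k] z)
    have h5 : (0:ℝ) ≤ 5^k * t := by positivity
    have hn : (0:ℝ) ≤ 5/2 + 5^k * t := by linarith
    rw [pow_succ]
    nlinarith [ih, sq_nonneg (5^k * t)]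

lemma julia_norm_le {z : ℂ} (hz : z ∈ Julia) : ‖z - 5/2‖ ≤ 5/2 := by
  by_contra h
  push_neg at h
  obtain ⟨C, hC⟩ := isBounded_iff_forall_norm_le.mp (julia_def hz)
  have ht0 : 0 < ‖z - 5/2‖ - 5/2 := by linarith
  obtain ⟨k, hk⟩ := pow_unbounded_of_one_lt ((C + 5/2) / (‖z - 5/2‖ - 5/2))
    (by norm_num : (1:ℝ) < 5)
  have h2 := escape (t := ‖z - 5/2‖ - 5/2) (by linarith) z (by linarith) k
  have h3 : ‖R^[k] z‖ ≤ C := hC _ ⟨k, rfl⟩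
  have h4 : ‖R^[k] z - 5/2‖ ≤ C + 5/2 := by
    calc ‖R^[k] z - 5/2‖ ≤ ‖R^[k] z‖ + ‖(5/2:ℂ)‖ := norm_sub_le _ _
      _ ≤ C + 5/2 := by rw [norm_5half]; linarith
  have h5 : C + 5/2 < 5^k * (‖z - 5/2‖ - 5/2) := (div_lt_iff₀ ht0).mp hk
  linarith

lemma julia_iter_norm_le {z : ℂ} (hz : z ∈ Julia) (n : ℕ) : ‖R^[n] z - 5/2‖ ≤ 5/2 :=
  julia_norm_le (julia_iter hz n)

lemma R_re (w : ℂ) : (R w).re = w.re * 5 - w.re^2 + w.im^2 := by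
  simp [R, Complex.mul_re, Complex.sub_re, Complex.sub_im]; ring

lemma R_im (w : ℂ) : (R w).im = w.im * (5 - 2 * w.re) := by
  simp [R, Complex.mul_im, Complex.sub_re, Complex.sub_im]; ring

lemma re_sub_5half (w : ℂ) : (w - 5/2).re = w.re - 5/2 := by
  simp [Complex.sub_re]

lemma im_sub_5half (w : ℂ) : (w - 5/2).im = w.im := by
  simp [Complex.sub_im]

lemma julia_re_le {z : ℂ} (hz : z ∈ Julia) : z.re ≤ 5 ∧ 0 ≤ z.re := by
  have h := julia_norm_le hz
  have h1 : |(z - 5/2).re| ≤ ‖z - 5/2‖ := Complex.abs_re_le_norm _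
  rw [re_sub_5half] at h1
  rw [abs_le] at h1
  constructor <;> linarith [h1.1, h1.2]

lemma julia_im_sq_le {z : ℂ} (hz : z ∈ Julia) : z.im^2 ≤ 25/4 := by
  have h := julia_norm_le hz
  have h1 : |(z - 5/2).im| ≤ ‖z - 5/2‖ := Complex.abs_im_le_norm _
  rw [im_sub_5half] at h1
  nlinarith [abs_nonneg z.im, sq_abs z.im]

lemma julia_im {z : ℂ} (hz : z ∈ Julia) : z.im = 0 := by
  have key : ∀ k : ℕ, 5^k * z.im^2 ≤ (R^[k] z).im^2 := by
    intro k
    induction k with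
    | zero => simp
    | succ k ih =>
      rw [Function.iterate_succ_apply', pow_succ]
      set w := R^[k] z with hw
      have hwJ : w ∈ Julia := julia_iter hz k
      have hRwJ : R w ∈ Julia := by
        have h := julia_iter hz (k+1)
        rwa [Function.iterate_succ_apply'] at h
      have h5 : (R w).re ≤ 5 := (julia_re_le hRwJ).1
      rw [R_re] at h5
      have him : (R w).im = w.im * (5 - 2 * w.re) := R_im w
      rw [him]
      nlinarith [ih, sq_nonneg w.im, sq_nonneg (w.im^2)]
  have h2 : ∀ k : ℕ, (5:ℝ)^k * z.im^2 ≤ 25/4 := fun k =>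
    le_trans (key k) (julia_im_sq_le (julia_iter hz k))
  have h0 : z.im ^ 2 = 0 := key0 (by norm_num : (1:ℝ) < 5) (sq_nonneg z.im) h2
  exact sq_eq_zero_iff.mp h0

/-- **Statement 13.** For every `λ ∈ 𝒥 \ ({0} ∪ Σ₄ ∪ Σ₅)` there are infinitely many `n` with
`R^{∘n}(λ) ∈ φ₋(𝒥)`, i.e. `R^{∘n}(λ) ∈ 𝒥` is real with `R^{∘n}(λ) ≤ (5 - √5)/2`. -/
theorem orbit_infinitely_often_in_left_branch :
    ∀ lam ∈ Julia \ ({0} ∪ Sigma4 ∪ Sigma5),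
      {n : ℕ | R^[n] lam ∈ Julia ∧ (R^[n] lam).im = 0 ∧
        (R^[n] lam).re ≤ (5 - Real.sqrt 5) / 2}.Infinite := by
  intro lam hlam
  obtain ⟨hJ, hnot⟩ := hlam
  by_contra hfin
  rw [Set.not_infinite] at hfin
  obtain ⟨N, hN⟩ := hfin.bddAbove
  have hs5 : Real.sqrt 5 ^ 2 = 5 := Real.sq_sqrt (by norm_num)
  have hs1 : (1:ℝ) ≤ Real.sqrt 5 := by
    rw [show (1:ℝ) = Real.sqrt 1 by simp]
    exact Real.sqrt_le_sqrt (by norm_num)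
  -- for n > N the orbit point is in the right interval
  have key : ∀ n, N < n → (5 + Real.sqrt 5)/2 ≤ (R^[n] lam).re := by
    intro n hn
    have hJn := julia_iter hJ n
    have him := julia_im hJn
    have hre : (5 - Real.sqrt 5)/2 < (R^[n] lam).re := by
      by_contra h
      push_neg at h
      exact absurd (hN ⟨hJn, him, h⟩) (not_le.mpr hn)
    have hJn1 := julia_iter hJ (n+1)
    have h5 : (R^[n+1] lam).re ≤ 5 := (julia_re_le hJn1).1
    rw [Function.iterate_succ_apply', R_re, him] at h5
    set x := (R^[n] lam).re
    nlinarith [hre, h5, hs5]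
  -- expansion estimate away from the fixed point 4
  set M := N + 1 with hM
  have hexp : ∀ k : ℕ, 2^k * |(R^[M] lam).re - 4| ≤ |(R^[M+k] lam).re - 4| := by
    intro k
    induction k with
    | zero => simp
    | succ k ih =>
      set w := R^[M+k] lam with hw
      have hstep : R^[M+(k+1)] lam = R w := Function.iterate_succ_apply' R (M+k) lam
      rw [hstep]
      have hwkey : (5 + Real.sqrt 5)/2 ≤ w.re := key (M+k) (by omega)
      have hwim : w.im = 0 := julia_im (julia_iter hJ (M+k))
      have hx3 : (3:ℝ) ≤ w.re := by nlinarith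
      have heq : (R w).re - 4 = -((w.re - 1) * (w.re - 4)) := by
        rw [R_re, hwim]; ring
      have habs : |(R w).re - 4| = (w.re - 1) * |w.re - 4| := by
        rw [heq, abs_neg, abs_mul, abs_of_nonneg (by linarith : (0:ℝ) ≤ w.re - 1)]
      rw [habs, pow_succ]
      have h2le : 2 * |w.re - 4| ≤ (w.re - 1) * |w.re - 4| :=
        mul_le_mul_of_nonneg_right (by linarith) (abs_nonneg _)
      nlinarith [ih, abs_nonneg (w.re - 4), abs_nonneg ((R^[M] lam).re - 4)]
  -- the distance to 4 is bounded, hence zero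
  have hbd : ∀ k : ℕ, (2:ℝ)^k * |(R^[M] lam).re - 4| ≤ 5 := by
    intro k
    refine le_trans (hexp k) ?_
    have h1 := julia_re_le (julia_iter hJ (M+k))
    rw [abs_le]
    constructor <;> linarith [h1.1, h1.2]
  have hzero : |(R^[M] lam).re - 4| = 0 :=
    key0 (by norm_num : (1:ℝ) < 2) (abs_nonneg _) hbd
  have hre4 : (R^[M] lam).re = 4 := by
    have := abs_eq_zero.mp hzero; linarith
  have him0 : (R^[M] lam).im = 0 := julia_im (julia_iter hJ M)
  have h4 : R^[M] lam = 4 := by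
    apply Complex.ext
    · rw [hre4]; norm_num
    · rw [him0]; norm_num
  apply hnot
  left; right
  exact Set.mem_iUnion.mpr ⟨M, by simpa using h4⟩

end SGpaper
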